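/- (Theorem 2.4, fourth identity, q-case: joint moments of the negative q-trinomial distribution of the second kind.) Let n ≥ 1 be a natural number, β₁, β₂ ∈ (0,1) and m₁, m₂ ∈ ℕ. Then the double series over all pairs (v₁,v₂) ∈ ℕ × ℕ of [v₁]_{m₁,q} · [v₂]_{m₂,q} · ( ∏_{i=1}^{m₁} (1 − β₁·q^{n+v₂+i−1}) ) · v(v₁,v₂) converges, with sum equal to [n+m₁+m₂−1]_{m₁+m₂,q} · β₁^{m₁} · β₂^{m₂} / ∏_{i=1}^{m₁+m₂} (1 − β₂·q^{n+i−1}). -/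

import Mathlib

/-! Writing `NB_N(v; t) = [N-1+v choose v]_q t^v ⟨1 ⊖ t⟩_N` for the negative `q`-binomial law,
the pmf factors as `NB_{n+v₂}(v₁; β₁) · NB_n(v₂; β₂)`. The negative `q`-binomial theorem
`∑_w [M+w choose w]_q t^w = 1/⟨1 ⊖ t⟩_{M+1}` yields the factorial moments
`∑_v [v]_{m,q} [M+v choose v]_q t^v = [M+m]_{m,q} t^m / ⟨1 ⊖ t⟩_{M+m+1}`.
Summing over `v₁` first gives such a moment (the product in the summand completes
`⟨1 ⊖ β₁⟩_{n+v₂}` to the `⟨1 ⊖ β₁⟩_{n+v₂+m₁}` of its denominator, so the two cancel), and what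
remains is a moment sum over `v₂`; since all terms are nonnegative, the iterated sum is the
double sum. -/

open Finset

/-- q-integer `[k]_q = (1 - q^k)/(1 - q)`. -/
noncomputable def qInt (q : ℝ) (k : ℤ) : ℝ := (1 - q ^ k) / (1 - q)

/-- q-factorial `[n]_q! = ∏_{i=1}^n [i]_q`. -/
noncomputable def qFact (q : ℝ) (n : ℕ) : ℝ := ∏ i ∈ Finset.Icc 1 n, qInt q (i : ℤ)

/-- q-binomial coefficient `C_q(n,k)`. -/
noncomputable def qBinom (q : ℝ) (n k : ℕ) : ℝ := qFact q n / (qFact q k * qFact q (n - k))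

/-- q-falling factorial `[u]_{m,q} = ∏_{i=1}^m [u-i+1]_q`. -/
noncomputable def qFall (q : ℝ) (u : ℤ) (m : ℕ) : ℝ := ∏ i ∈ Finset.Icc 1 m, qInt q (u - (i : ℤ) + 1)

/-- `[k]_{q⁻¹} = q^{1-k} · [k]_q`. -/
noncomputable def qIntInv (q : ℝ) (k : ℤ) : ℝ := q ^ (1 - k) * qInt q k

/-- `[u]_{m,q⁻¹} = ∏_{i=1}^m [u-i+1]_{q⁻¹}`. -/
noncomputable def qFallInv (q : ℝ) (u : ℤ) (m : ℕ) : ℝ := ∏ i ∈ Finset.Icc 1 m, qIntInv q (u - (i : ℤ) + 1)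

/-- `b(k) = k(k-1)/2`. -/
def bb (k : ℕ) : ℕ := k * (k - 1) / 2

/-- `⟨1 ⊕ α⟩_m = ∏_{i=1}^m (1 + α q^{i-1})`. -/
noncomputable def oplus (q α : ℝ) (m : ℕ) : ℝ := ∏ i ∈ Finset.Icc 1 m, (1 + α * q ^ (i - 1))

/-- `⟨1 ⊖ β⟩_m = ∏_{i=1}^m (1 - β q^{i-1})`. -/
noncomputable def ominus (q β : ℝ) (m : ℕ) : ℝ := ∏ i ∈ Finset.Icc 1 m, (1 - β * q ^ (i - 1))

/-- q-trinomial coefficient `T_q(n; x₁, x₂)`. -/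
noncomputable def qTri (q : ℝ) (n x1 x2 : ℕ) : ℝ :=
  qFact q n / (qFact q x1 * qFact q x2 * qFact q (n - x1 - x2))

/-- pmf of the negative q-trinomial distribution of the second kind. -/
noncomputable def vpmf (q b1 b2 : ℝ) (n v1 v2 : ℕ) : ℝ :=
  (qFact q (n + v1 + v2 - 1) / (qFact q v1 * qFact q v2 * qFact q (n - 1))) *
    b1 ^ v1 * b2 ^ v2 * ominus q b1 (n + v2) * ominus q b2 n

variable {q : ℝ}

lemma qInt_natCast_pos (hq0 : 0 < q) (hq1 : q < 1) {n : ℕ} (hn : 0 < n) :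
    0 < qInt q n := by
  rw [qInt, zpow_natCast]
  exact div_pos (by linarith [pow_lt_one₀ hq0.le hq1 hn.ne']) (by linarith)

lemma qInt_natCast_add (a b : ℕ) : qInt q (a + b : ℕ) = qInt q a + q ^ a * qInt q b := by
  simp only [qInt, zpow_natCast, pow_add]
  ring

lemma qFact_zero : qFact q 0 = 1 := by simp [qFact]

lemma qFact_succ (n : ℕ) : qFact q (n + 1) = qFact q n * qInt q (n + 1 : ℕ) := by
  rw [qFact, qFact, prod_Icc_succ_top (by omega)]

lemma qFact_pos (hq0 : 0 < q) (hq1 : q < 1) (n : ℕ) : 0 < qFact q n :=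
  prod_pos fun _ hi => qInt_natCast_pos hq0 hq1 (mem_Icc.mp hi).1

lemma qFact_ne_zero (hq0 : 0 < q) (hq1 : q < 1) (n : ℕ) : qFact q n ≠ 0 :=
  (qFact_pos hq0 hq1 n).ne'

lemma qBinom_add_self (M w : ℕ) :
    qBinom q (M + w) w = qFact q (M + w) / (qFact q w * qFact q M) := by
  rw [qBinom, Nat.add_sub_cancel]

lemma qBinom_zero_right (hq0 : 0 < q) (hq1 : q < 1) (n : ℕ) : qBinom q n 0 = 1 := by
  simp [qBinom, qFact_zero, qFact_ne_zero hq0 hq1]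

lemma qBinom_self (hq0 : 0 < q) (hq1 : q < 1) (n : ℕ) : qBinom q n n = 1 := by
  simp [qBinom, qFact_zero, qFact_ne_zero hq0 hq1]

lemma qBinom_add_self_succ_succ (hq0 : 0 < q) (hq1 : q < 1) (M w : ℕ) :
    qBinom q (M + 1 + (w + 1)) (w + 1) =
      qBinom q (M + (w + 1)) (w + 1) + q ^ (M + 1) * qBinom q (M + 1 + w) w := by
  have hIM : qInt q (M + 1 : ℕ) ≠ 0 := (qInt_natCast_pos hq0 hq1 M.succ_pos).ne'
  have hIw : qInt q (w + 1 : ℕ) ≠ 0 := (qInt_natCast_pos hq0 hq1 w.succ_pos).ne'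
  have hF := qFact_ne_zero hq0 hq1
  have hsum : qInt q (M + 1 + w + 1 : ℕ) =
      qInt q (M + 1 : ℕ) + q ^ (M + 1) * qInt q (w + 1 : ℕ) := by
    rw [show M + 1 + w + 1 = (M + 1) + (w + 1) by ring, qInt_natCast_add]
  rw [qBinom_add_self, qBinom_add_self, qBinom_add_self, show M + (w + 1) = M + 1 + w by ring,
    ← add_assoc, qFact_succ (M + 1 + w), qFact_succ w, qFact_succ M, hsum]
  field_simp [hF]

lemma qBinom_add_self_eq_sum_antidiagonal (hq0 : 0 < q) (hq1 : q < 1) (M w : ℕ) :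
    qBinom q (M + 1 + w) w =
      ∑ p ∈ antidiagonal w, (q ^ (M + 1)) ^ p.1 * qBinom q (M + p.2) p.2 := by
  induction w with
  | zero => simp [qBinom_zero_right hq0 hq1]
  | succ w ih =>
    rw [Nat.sum_antidiagonal_succ, qBinom_add_self_succ_succ hq0 hq1, ih, mul_sum, pow_zero,
      one_mul]
    exact congrArg _ (sum_congr rfl fun p _ => by ring)

lemma ominus_succ (t : ℝ) (N : ℕ) : ominus q t (N + 1) = ominus q t N * (1 - t * q ^ N) := by
  rw [ominus, prod_Icc_succ_top (by omega), ← ominus, Nat.add_sub_cancel]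

lemma ominus_add (t : ℝ) (N m : ℕ) :
    ominus q t (N + m) = ominus q t N * ∏ i ∈ Icc 1 m, (1 - t * q ^ (N + i - 1)) := by
  induction m with
  | zero => simp
  | succ m ih =>
    rw [← add_assoc, ominus_succ, ih, prod_Icc_succ_top (by omega),
      show N + (m + 1) - 1 = N + m by omega, mul_assoc]

lemma one_sub_mul_pow_pos (hq0 : 0 ≤ q) (hq1 : q ≤ 1) {t : ℝ} (ht0 : 0 ≤ t) (ht1 : t < 1)
    (k : ℕ) : 0 < 1 - t * q ^ k := by
  nlinarith [pow_le_one₀ hq0 hq1 (n := k), pow_nonneg hq0 k]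

lemma ominus_pos (hq0 : 0 ≤ q) (hq1 : q ≤ 1) {t : ℝ} (ht0 : 0 ≤ t) (ht1 : t < 1) (N : ℕ) :
    0 < ominus q t N :=
  prod_pos fun _ _ => one_sub_mul_pow_pos hq0 hq1 ht0 ht1 _

/-- The negative `q`-binomial theorem. Passing from `M` to `M + 1` multiplies the sum by the
geometric series of `q ^ (M + 1) * t`, and the Cauchy product of the two is the `q`-Pascal
convolution `qBinom_add_self_eq_sum_antidiagonal`. -/
theorem hasSum_qBinom_add_self_mul_pow (hq0 : 0 < q) (hq1 : q < 1) {t : ℝ} (ht0 : 0 ≤ t)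
    (ht1 : t < 1) (M : ℕ) :
    HasSum (fun w => qBinom q (M + w) w * t ^ w) (ominus q t (M + 1))⁻¹ := by
  induction M with
  | zero =>
    simpa [qBinom_self hq0 hq1, ominus_succ, ominus] using hasSum_geometric_of_lt_one ht0 ht1
  | succ M ih =>
    have hr0 : 0 ≤ q ^ (M + 1) * t := by positivity
    have hr1 : q ^ (M + 1) * t < 1 := by
      linarith [one_sub_mul_pow_pos hq0.le hq1.le ht0 ht1 (M + 1)]
    have hgeom := hasSum_geometric_of_lt_one hr0 hr1
    have hcauchy := hasSum_sum_range_mul_of_summable_norm hgeom.summable.norm ih.summable.norm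
    simp_rw [← Nat.sum_antidiagonal_eq_sum_range_succ
      (fun k l => (q ^ (M + 1) * t) ^ k * (qBinom q (M + l) l * t ^ l))] at hcauchy
    rw [hgeom.tsum_eq, ih.tsum_eq] at hcauchy
    rw [ominus_succ, mul_inv_rev, mul_comm t (q ^ (M + 1))]
    refine hcauchy.congr_fun fun w => ?_
    rw [qBinom_add_self_eq_sum_antidiagonal hq0 hq1, sum_mul]
    refine sum_congr rfl fun p hp => ?_
    rw [← mem_antidiagonal.mp hp, pow_add, mul_pow]
    ring

lemma qFall_one (u : ℤ) : qFall q u 1 = qInt q u := by simp [qFall]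

lemma qFall_add (u : ℤ) (a b : ℕ) : qFall q u (a + b) = qFall q u a * qFall q (u - a) b := by
  induction b with
  | zero => simp [qFall]
  | succ b ih =>
    simp only [qFall] at ih ⊢
    rw [← add_assoc, prod_Icc_succ_top (by omega), prod_Icc_succ_top (by omega), ih, mul_assoc]
    push_cast
    ring_nf

lemma qFall_natCast_self (n : ℕ) : qFall q n n = qFact q n := by
  induction n with
  | zero => simp [qFall, qFact_zero]
  | succ n ih =>
    have h := qFall_add (q := q) ((n + 1 : ℕ) : ℤ) 1 n
    rw [add_comm 1 n, qFall_one, Nat.cast_succ, Nat.cast_one, add_sub_cancel_right, ih] at h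
    rw [Nat.cast_succ, h, qFact_succ, mul_comm, Nat.cast_succ]

lemma qFall_natCast_add (hq0 : 0 < q) (hq1 : q < 1) (w m : ℕ) :
    qFall q (w + m : ℕ) m = qFact q (w + m) / qFact q w := by
  have h := qFall_add (q := q) ((w + m : ℕ) : ℤ) m w
  rw [add_comm m w, qFall_natCast_self, show ((w + m : ℕ) : ℤ) - m = w by push_cast; ring,
    qFall_natCast_self] at h
  rw [h, mul_div_cancel_right₀ _ (qFact_ne_zero hq0 hq1 w)]

lemma qFall_natCast_eq_zero_of_lt {v m : ℕ} (h : v < m) : qFall q v m = 0 :=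
  prod_eq_zero (i := v + 1) (mem_Icc.mpr ⟨by omega, h⟩) (by simp [qInt])

lemma qFall_natCast_nonneg (hq0 : 0 < q) (hq1 : q < 1) (v m : ℕ) : 0 ≤ qFall q v m := by
  rcases lt_or_ge v m with h | h
  · rw [qFall_natCast_eq_zero_of_lt h]
  · obtain ⟨w, rfl⟩ := Nat.exists_eq_add_of_le' h
    rw [qFall_natCast_add hq0 hq1]
    exact div_nonneg (qFact_pos hq0 hq1 _).le (qFact_pos hq0 hq1 _).le

theorem hasSum_qFall_mul_qBinom_add_self_mul_pow (hq0 : 0 < q) (hq1 : q < 1) {t : ℝ}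
    (ht0 : 0 ≤ t) (ht1 : t < 1) (M m : ℕ) :
    HasSum (fun v : ℕ => qFall q v m * qBinom q (M + v) v * t ^ v)
      (qFall q (M + m : ℕ) m * t ^ m / ominus q t (M + m + 1)) := by
  have hlow : ∑ v ∈ range m, qFall q v m * qBinom q (M + v) v * t ^ v = 0 :=
    sum_eq_zero fun v hv => by
      rw [qFall_natCast_eq_zero_of_lt (mem_range.mp hv), zero_mul, zero_mul]
  rw [← hasSum_nat_add_iff' m, hlow, sub_zero, div_eq_mul_inv]
  refine ((hasSum_qBinom_add_self_mul_pow hq0 hq1 ht0 ht1 (M + m)).mul_left _).congr_fun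
    fun w => ?_
  have hF := qFact_ne_zero hq0 hq1
  rw [qFall_natCast_add hq0 hq1, qFall_natCast_add hq0 hq1, qBinom_add_self, qBinom_add_self,
    show M + (w + m) = M + m + w by ring]
  field_simp [hF]
  ring

lemma qFall_natCast_mul_qBinom_add_self (hq0 : 0 < q) (hq1 : q < 1) (K v m : ℕ) :
    qFall q (K + v + m : ℕ) m * qBinom q (K + v) v =
      qBinom q (K + m + v) v * qFall q (K + m : ℕ) m := by
  have hF := qFact_ne_zero hq0 hq1
  rw [qFall_natCast_add hq0 hq1, qFall_natCast_add hq0 hq1, qBinom_add_self, qBinom_add_self,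
    show K + m + v = K + v + m by ring]
  field_simp [hF]

theorem hasSum_prod_of_nonneg {β γ : Type*} {f : β × γ → ℝ} (hf : 0 ≤ f) {g : γ → ℝ} {a : ℝ}
    (hfiber : ∀ c, HasSum (fun b => f (b, c)) (g c)) (hg : HasSum g a) : HasSum f a := by
  rw [← (Equiv.prodComm γ β).hasSum_iff]
  have hsumm : Summable (f ∘ Equiv.prodComm γ β) :=
    (summable_prod_of_nonneg (f := f ∘ Equiv.prodComm γ β) fun _ => hf _).mpr
      ⟨fun c => (hfiber c).summable, hg.summable.congr fun c => ((hfiber c).tsum_eq).symm⟩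
  convert hsumm.hasSum
  rw [hsumm.tsum_prod' fun c => (hfiber c).summable, ← hg.tsum_eq]
  exact tsum_congr fun c => ((hfiber c).tsum_eq).symm

variable {n : ℕ} {β1 β2 : ℝ}

lemma vpmf_eq_mul (hq0 : 0 < q) (hq1 : q < 1) (hn : 1 ≤ n) (v1 v2 : ℕ) :
    vpmf q β1 β2 n v1 v2 =
      (qBinom q (n - 1 + v2 + v1) v1 * β1 ^ v1 * ominus q β1 (n + v2)) *
        (qBinom q (n - 1 + v2) v2 * β2 ^ v2 * ominus q β2 n) := by
  have hF := qFact_ne_zero hq0 hq1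
  rw [vpmf, qBinom_add_self, qBinom_add_self, show n + v1 + v2 - 1 = n - 1 + v2 + v1 by omega]
  field_simp [hF]

lemma vpmf_nonneg (hq0 : 0 < q) (hq1 : q < 1) (hβ1 : 0 ≤ β1) (hβ1' : β1 < 1) (hβ2 : 0 ≤ β2)
    (hβ2' : β2 < 1) (v1 v2 : ℕ) : 0 ≤ vpmf q β1 β2 n v1 v2 := by
  have hF := qFact_pos hq0 hq1
  have h1 := ominus_pos hq0.le hq1.le hβ1 hβ1' (n + v2)
  have h2 := ominus_pos hq0.le hq1.le hβ2 hβ2' n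
  have h3 := hF (n + v1 + v2 - 1)
  have h4 := hF v1
  have h5 := hF v2
  have h6 := hF (n - 1)
  rw [vpmf]
  positivity

lemma hasSum_vpmf_moment_inner (hq0 : 0 < q) (hq1 : q < 1) (hn : 1 ≤ n) (hβ1 : 0 ≤ β1)
    (hβ1' : β1 < 1) (m1 m2 v2 : ℕ) :
    HasSum (fun v1 : ℕ =>
        qFall q v1 m1 * qFall q v2 m2 * (∏ i ∈ Icc 1 m1, (1 - β1 * q ^ (n + v2 + i - 1)))
          * vpmf q β1 β2 n v1 v2)
      (qFall q v2 m2 * (qBinom q (n - 1 + v2) v2 * β2 ^ v2 * ominus q β2 n)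
        * (qFall q (n - 1 + v2 + m1 : ℕ) m1 * β1 ^ m1)) := by
  set P := ∏ i ∈ Icc 1 m1, (1 - β1 * q ^ (n + v2 + i - 1)) with hP_def
  set C := qFall q v2 m2 * P * ominus q β1 (n + v2) *
    (qBinom q (n - 1 + v2) v2 * β2 ^ v2 * ominus q β2 n) with hC
  have hP : 0 < P := prod_pos fun _ _ => one_sub_mul_pow_pos hq0.le hq1.le hβ1 hβ1' _
  have hO := ominus_pos hq0.le hq1.le hβ1 hβ1' (n + v2)
  have hterm : ∀ v1 : ℕ, qFall q v1 m1 * qFall q v2 m2 * P * vpmf q β1 β2 n v1 v2 =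
      C * (qFall q v1 m1 * qBinom q (n - 1 + v2 + v1) v1 * β1 ^ v1) := fun v1 => by
    rw [vpmf_eq_mul hq0 hq1 hn]
    ring
  have hval : qFall q v2 m2 * (qBinom q (n - 1 + v2) v2 * β2 ^ v2 * ominus q β2 n)
      * (qFall q (n - 1 + v2 + m1 : ℕ) m1 * β1 ^ m1) =
      C * (qFall q (n - 1 + v2 + m1 : ℕ) m1 * β1 ^ m1 / ominus q β1 (n - 1 + v2 + m1 + 1)) := by
    rw [show n - 1 + v2 + m1 + 1 = n + v2 + m1 by omega, ominus_add, ← hP_def, hC]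
    field_simp
  rw [hval]
  exact ((hasSum_qFall_mul_qBinom_add_self_mul_pow hq0 hq1 hβ1 hβ1' _ m1).mul_left C).congr_fun
    hterm

lemma hasSum_vpmf_moment_outer (hq0 : 0 < q) (hq1 : q < 1) (hn : 1 ≤ n) (hβ2 : 0 ≤ β2)
    (hβ2' : β2 < 1) (m1 m2 : ℕ) :
    HasSum (fun v2 : ℕ =>
        qFall q v2 m2 * (qBinom q (n - 1 + v2) v2 * β2 ^ v2 * ominus q β2 n)
          * (qFall q (n - 1 + v2 + m1 : ℕ) m1 * β1 ^ m1))
      (qFall q ((n : ℤ) + (m1 : ℤ) + (m2 : ℤ) - 1) (m1 + m2) * β1 ^ m1 * β2 ^ m2 /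
        ∏ i ∈ Icc 1 (m1 + m2), (1 - β2 * q ^ (n + i - 1))) := by
  set C := qFall q (n - 1 + m1 : ℕ) m1 * β1 ^ m1 * ominus q β2 n with hC
  have hO := ominus_pos hq0.le hq1.le hβ2 hβ2' n
  have hterm : ∀ v2 : ℕ, qFall q v2 m2 * (qBinom q (n - 1 + v2) v2 * β2 ^ v2 * ominus q β2 n)
      * (qFall q (n - 1 + v2 + m1 : ℕ) m1 * β1 ^ m1) =
      C * (qFall q v2 m2 * qBinom q (n - 1 + m1 + v2) v2 * β2 ^ v2) := fun v2 => by
    linear_combination (qFall q v2 m2 * β2 ^ v2 * ominus q β2 n * β1 ^ m1) *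
      qFall_natCast_mul_qBinom_add_self hq0 hq1 (n - 1) v2 m1
  have hfall : qFall q ((n : ℤ) + (m1 : ℤ) + (m2 : ℤ) - 1) (m1 + m2) =
      qFall q (n - 1 + m1 + m2 : ℕ) m2 * qFall q (n - 1 + m1 : ℕ) m1 := by
    rw [add_comm m1, qFall_add]
    congr 2 <;> push_cast [Nat.cast_sub hn] <;> ring
  have hval : qFall q ((n : ℤ) + (m1 : ℤ) + (m2 : ℤ) - 1) (m1 + m2) * β1 ^ m1 * β2 ^ m2 /
        ∏ i ∈ Icc 1 (m1 + m2), (1 - β2 * q ^ (n + i - 1)) =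
      C * (qFall q (n - 1 + m1 + m2 : ℕ) m2 * β2 ^ m2 / ominus q β2 (n - 1 + m1 + m2 + 1)) := by
    rw [show n - 1 + m1 + m2 + 1 = n + (m1 + m2) by omega, ominus_add, hfall, hC]
    field_simp
  rw [hval]
  exact ((hasSum_qFall_mul_qBinom_add_self_mul_pow hq0 hq1 hβ2 hβ2' _ m2).mul_left C).congr_fun
    hterm

theorem stmt18 (q : ℝ) (hq0 : 0 < q) (hq1 : q < 1) (n : ℕ) (hn : 1 ≤ n) (β1 β2 : ℝ)
    (hβ1 : 0 < β1) (hβ1' : β1 < 1) (hβ2 : 0 < β2) (hβ2' : β2 < 1) (m1 m2 : ℕ) :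
    HasSum (fun v : ℕ × ℕ =>
        qFall q (v.1 : ℤ) m1 * qFall q (v.2 : ℤ) m2
          * (∏ i ∈ Finset.Icc 1 m1, (1 - β1 * q ^ (n + v.2 + i - 1)))
          * vpmf q β1 β2 n v.1 v.2)
      (qFall q ((n : ℤ) + (m1 : ℤ) + (m2 : ℤ) - 1) (m1 + m2) * β1 ^ m1 * β2 ^ m2 /
        ∏ i ∈ Finset.Icc 1 (m1 + m2), (1 - β2 * q ^ (n + i - 1))) := by
  refine hasSum_prod_of_nonneg (fun v => ?_)
    (hasSum_vpmf_moment_inner hq0 hq1 hn hβ1.le hβ1' m1 m2)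
    (hasSum_vpmf_moment_outer hq0 hq1 hn hβ2.le hβ2' m1 m2)
  have hP : 0 ≤ ∏ i ∈ Icc 1 m1, (1 - β1 * q ^ (n + v.2 + i - 1)) :=
    prod_nonneg fun _ _ => (one_sub_mul_pow_pos hq0.le hq1.le hβ1.le hβ1' _).le
  have hF1 := qFall_natCast_nonneg hq0 hq1 v.1 m1
  have hF2 := qFall_natCast_nonneg hq0 hq1 v.2 m2
  have hv := vpmf_nonneg (n := n) hq0 hq1 hβ1.le hβ1' hβ2.le hβ2' v.1 v.2
  positivity
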